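/- For every t ∈ [0,1] and all z₁, z₂ ∈ ℝ, the one-sided Lipschitz condition (Ψ_t(z₂) − Ψ_t(z₁))(z₂ − z₁) ≤ e^t (z₂ − z₁)² holds. -/

import Mathlib

/-!
Written as `Φ_t(z) = z / √(a + b z²)` with `a = e^{-2t}` and `b = 1 - a ≥ 0`, the flow map has
derivative `a / (a + b z²)^{3/2} ≤ a^{-1/2} = e^t`, so it is `e^t`-Lipschitz. Hence for `t > 0`
`(Ψ_t(z₂) - Ψ_t(z₁))(z₂ - z₁) ≤ (e^t - 1)/t · (z₂ - z₁)²`, and `e^t - 1 ≤ t e^t` by convexity of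
`exp`. For `t = 0`, `z - z³` is the identity minus the monotone map `z ↦ z³`.
-/

noncomputable section

/-- The flow map `Φ_t(z) = z / √(z² + (1 - z²) e^{-2t})` of the ODE `ż = z - z³`. -/
def Phi (t z : ℝ) : ℝ := z / Real.sqrt (z ^ 2 + (1 - z ^ 2) * Real.exp (-2 * t))

/-- `Ψ_t(z) = (Φ_t(z) - z)/t` for `t > 0`, and `Ψ_0(z) = z - z³`. -/
def Psi (t z : ℝ) : ℝ := if t = 0 then z - z ^ 3 else (Phi t z - z) / t

open Real

theorem hasDerivAt_div_sqrt_add_mul_sq {a b : ℝ} (ha : 0 < a) (hb : 0 ≤ b) (z : ℝ) :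
    HasDerivAt (fun z => z / √(a + b * z ^ 2)) (a / √(a + b * z ^ 2) ^ 3) z := by
  have hpos : 0 < a + b * z ^ 2 := by positivity
  have hsq : HasDerivAt (fun z : ℝ => a + b * z ^ 2) (b * (2 * z)) z := by
    simpa using ((hasDerivAt_pow 2 z).const_mul b).const_add a
  have hsqrt := (Real.hasDerivAt_sqrt hpos.ne').comp z hsq
  refine ((hasDerivAt_id z).div hsqrt (Real.sqrt_pos.mpr hpos).ne').congr_deriv ?_
  have hs : √(a + b * z ^ 2) ^ 2 = a + b * z ^ 2 := Real.sq_sqrt hpos.le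
  simp only [Function.comp_apply, id]
  field_simp
  linear_combination hs

theorem abs_div_sqrt_add_mul_sq_sub_le {a b : ℝ} (ha : 0 < a) (hb : 0 ≤ b) (z₁ z₂ : ℝ) :
    |z₂ / √(a + b * z₂ ^ 2) - z₁ / √(a + b * z₁ ^ 2)| ≤ 1 / √a * |z₂ - z₁| := by
  have hra : 0 < √a := Real.sqrt_pos.mpr ha
  have hderiv_le (z : ℝ) : ‖a / √(a + b * z ^ 2) ^ 3‖ ≤ 1 / √a := by
    have hle : √a ≤ √(a + b * z ^ 2) := Real.sqrt_le_sqrt (le_add_of_nonneg_right (by positivity))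
    have ha_eq : a = √a ^ 2 := (Real.sq_sqrt ha.le).symm
    rw [Real.norm_eq_abs, abs_of_nonneg (by positivity)]
    calc a / √(a + b * z ^ 2) ^ 3 ≤ a / √a ^ 3 := by gcongr
      _ = 1 / √a := by rw [ha_eq, Real.sqrt_sq hra.le]; field_simp
  simpa [Real.norm_eq_abs] using Convex.norm_image_sub_le_of_norm_hasDerivWithin_le
    (fun z _ => (hasDerivAt_div_sqrt_add_mul_sq ha hb z).hasDerivWithinAt)
    (fun z _ => hderiv_le z) convex_univ (Set.mem_univ z₁) (Set.mem_univ z₂)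

theorem Real.exp_sub_one_le_mul_exp (t : ℝ) : exp t - 1 ≤ t * exp t := by
  have h := mul_le_mul_of_nonneg_left (Real.add_one_le_exp (-t)) (exp_pos t).le
  rw [← exp_add, add_neg_cancel, exp_zero] at h
  linarith

theorem Phi_eq_div_sqrt (t z : ℝ) :
    Phi t z = z / √(exp (-2 * t) + (1 - exp (-2 * t)) * z ^ 2) := by
  rw [Phi]
  ring_nf

theorem abs_Phi_sub_le {t : ℝ} (ht : 0 ≤ t) (z₁ z₂ : ℝ) :
    |Phi t z₂ - Phi t z₁| ≤ exp t * |z₂ - z₁| := by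
  have hb : 0 ≤ 1 - exp (-2 * t) := sub_nonneg.mpr (exp_le_one_iff.mpr (by linarith))
  have hsqrt : √(exp (-2 * t)) = exp (-t) := by
    rw [show -2 * t = -t + -t by ring, exp_add, Real.sqrt_mul_self (exp_pos _).le]
  have h := abs_div_sqrt_add_mul_sq_sub_le (exp_pos (-2 * t)) hb z₁ z₂
  rwa [hsqrt, exp_neg, one_div, inv_inv, ← Phi_eq_div_sqrt, ← Phi_eq_div_sqrt] at h

theorem Psi_zero_sub_mul_le (z₁ z₂ : ℝ) :
    (Psi 0 z₂ - Psi 0 z₁) * (z₂ - z₁) ≤ (z₂ - z₁) ^ 2 := by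
  have hcube : 0 ≤ (z₂ ^ 3 - z₁ ^ 3) * (z₂ - z₁) := by
    have : 0 ≤ z₁ ^ 2 + z₁ * z₂ + z₂ ^ 2 := by nlinarith [sq_nonneg (z₁ + z₂)]
    nlinarith [mul_nonneg (sq_nonneg (z₂ - z₁)) this]
  simp only [Psi, if_true]
  nlinarith

theorem Psi_sub_mul_le {t : ℝ} (ht : 0 < t) (z₁ z₂ : ℝ) :
    (Psi t z₂ - Psi t z₁) * (z₂ - z₁) ≤ (exp t - 1) / t * (z₂ - z₁) ^ 2 := by
  have hPhi : (Phi t z₂ - Phi t z₁) * (z₂ - z₁) ≤ exp t * (z₂ - z₁) ^ 2 :=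
    calc (Phi t z₂ - Phi t z₁) * (z₂ - z₁) ≤ |Phi t z₂ - Phi t z₁| * |z₂ - z₁| := by
          rw [← abs_mul]; exact le_abs_self _
      _ ≤ exp t * |z₂ - z₁| * |z₂ - z₁| := by gcongr; exact abs_Phi_sub_le ht.le z₁ z₂
      _ = exp t * (z₂ - z₁) ^ 2 := by rw [mul_assoc, ← sq, sq_abs]
  simp only [Psi, if_neg ht.ne']
  rw [div_sub_div_same, div_mul_eq_mul_div, div_mul_eq_mul_div, div_le_div_iff_of_pos_right ht]
  linarith

/-- For every `t ∈ [0,1]` and all `z₁, z₂ ∈ ℝ`, the one-sided Lipschitz condition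
`(Ψ_t(z₂) - Ψ_t(z₁)) (z₂ - z₁) ≤ e^t (z₂ - z₁)²` holds. -/
theorem psi_one_sided_lipschitz (t : ℝ) (ht : t ∈ Set.Icc (0 : ℝ) 1) (z₁ z₂ : ℝ) :
    (Psi t z₂ - Psi t z₁) * (z₂ - z₁) ≤ Real.exp t * (z₂ - z₁) ^ 2 := by
  rcases ht.1.eq_or_lt with rfl | htpos
  · simpa using Psi_zero_sub_mul_le z₁ z₂
  calc (Psi t z₂ - Psi t z₁) * (z₂ - z₁) ≤ (exp t - 1) / t * (z₂ - z₁) ^ 2 :=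
        Psi_sub_mul_le htpos z₁ z₂
    _ ≤ exp t * (z₂ - z₁) ^ 2 := by
        gcongr
        rw [div_le_iff₀ htpos, mul_comm]
        exact Real.exp_sub_one_le_mul_exp t

end
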